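/- Let K be a finite-dimensional 𝔽_q-vector space of dimension b and H ⊆ K a subspace of dimension a. For any integer c with b − a ≤ c ≤ b, the number of subspaces G ⊆ K with dim G = c and G + H = K equals q^{(b−c)c} · (q⁻¹)_a / ( (q⁻¹)_{b−c} (q⁻¹)_{a+c−b} ). -/

import Mathlib

/-!
Sort the subspaces `G` by their intersection `U = G ⊓ H`, which is an `(a + c - b)`-dimensional
subspace of `H`. Modulo `U`, the `G` with `G ⊓ H = U` and `G ⊔ H = ⊤` are exactly the complements
of `H / U` in `K / U`; the complements of a subspace `W` form an affine space over
`Hom(K / W, W)`, so each class has `q ^ ((b - a) * (b - c))` members. The number of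
`e`-dimensional subspaces of an `a`-dimensional space is the Gaussian binomial coefficient,
obtained by counting linearly independent `e`-tuples in two ways, and the powers of `q` combine
to `q ^ ((b - c) * c)`.
-/

/-- The Pochhammer symbol `(q⁻¹)_m = ∏_{i=1}^m (1 - q^{-i})`. -/
noncomputable def qPoch (q : ℚ) (m : ℕ) : ℚ :=
  ∏ i ∈ Finset.range m, (1 - q⁻¹ ^ (i + 1))

open Module Submodule Finset

theorem Nat.card_eq_card_mul_of_card_fiber {X Y : Type*} [Finite X] [Finite Y] (f : X → Y)
    {m : ℕ} (h : ∀ y, Nat.card {x // f x = y} = m) : Nat.card X = Nat.card Y * m := by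
  cases nonempty_fintype Y
  rw [← Nat.card_congr (Equiv.sigmaFiberEquiv f), Nat.card_sigma]
  simp [h, Nat.card_eq_fintype_card]

section qPoch

theorem qPoch_succ (q : ℚ) (m : ℕ) : qPoch q (m + 1) = qPoch q m * (1 - q⁻¹ ^ (m + 1)) :=
  prod_range_succ _ _

theorem qPoch_zero (q : ℚ) : qPoch q 0 = 1 := prod_range_zero _

theorem qPoch_pos {q : ℚ} (hq : 1 < q) (m : ℕ) : 0 < qPoch q m :=
  prod_pos fun i _ => sub_pos.mpr <|
    pow_lt_one₀ (by positivity) (inv_lt_one_of_one_lt₀ hq) (Nat.succ_ne_zero i)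

theorem prod_pow_sub_pow_mul_qPoch {q : ℚ} (hq : q ≠ 0) (k m : ℕ) :
    (∏ i ∈ range k, (q ^ (m + k) - q ^ i)) * qPoch q m =
      q ^ ((m + k) * k) * qPoch q (m + k) := by
  induction k generalizing m with
  | zero => simp
  | succ k ih =>
    have hlast :
        (q ^ (m + (k + 1)) - q ^ k) * qPoch q m = q ^ (m + (k + 1)) * qPoch q (m + 1) := by
      rw [qPoch_succ, inv_pow]; field_simp; ring
    calc (∏ i ∈ range (k + 1), (q ^ (m + (k + 1)) - q ^ i)) * qPoch q m
        = (∏ i ∈ range k, (q ^ (m + 1 + k) - q ^ i)) * qPoch q (m + 1) * q ^ (m + (k + 1)) := by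
          rw [prod_range_succ, mul_assoc, hlast, show m + 1 + k = m + (k + 1) by ring]; ring
      _ = q ^ ((m + (k + 1)) * (k + 1)) * qPoch q (m + (k + 1)) := by
          rw [ih, show m + 1 + k = m + (k + 1) by ring]; ring

theorem cast_prod_pow_sub_pow_mul_qPoch {q : ℕ} (hq : 0 < q) (k m : ℕ) :
    ((∏ i : Fin k, (q ^ (m + k) - q ^ (i : ℕ)) : ℕ) : ℚ) * qPoch q m =
      (q : ℚ) ^ ((m + k) * k) * qPoch q (m + k) := by
  rw [← prod_pow_sub_pow_mul_qPoch (by positivity), Nat.cast_prod,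
    Fin.prod_univ_eq_prod_range (fun i => ((q ^ (m + k) - q ^ i : ℕ) : ℚ))]
  congr 1
  refine prod_congr rfl fun i hi => ?_
  rw [Nat.cast_sub (Nat.pow_le_pow_right hq (by simp at hi; omega))]
  push_cast; rfl

end qPoch

section Quotient

variable {R M : Type*} [Ring R] [AddCommGroup M] [Module R M]

namespace Submodule

def projEquivLinearMapQuotient (W : Submodule R M) (f₀ : {f : M →ₗ[R] W // ∀ x : W, f x = x}) :
    {f : M →ₗ[R] W // ∀ x : W, f x = x} ≃ (M ⧸ W →ₗ[R] W) where
  toFun f := W.liftQ (f.1 - f₀.1) fun x hx => by simp [f.2 ⟨x, hx⟩, f₀.2 ⟨x, hx⟩]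
  invFun φ := ⟨f₀.1 + φ ∘ₗ W.mkQ, fun x => by simp [f₀.2 x, (Quotient.mk_eq_zero W).mpr x.2]⟩
  left_inv f := by ext; simp
  right_inv φ := W.quot_hom_ext _ _ fun x => by simp

theorem isCompl_map_mkQ_iff {U H G : Submodule R M} (hUH : U ≤ H) (hUG : U ≤ G) :
    IsCompl (H.map U.mkQ) (G.map U.mkQ) ↔ G ⊔ H = ⊤ ∧ G ⊓ H = U := by
  have hinj := comap_injective_of_surjective U.mkQ_surjective
  rw [isCompl_iff, disjoint_iff, codisjoint_iff, ← hinj.eq_iff, ← hinj.eq_iff (b := ⊤), comap_inf,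
    ← map_sup, comap_map_mkQ, comap_map_mkQ, comap_map_mkQ, comap_bot, ker_mkQ, comap_top,
    sup_eq_right.mpr hUH, sup_eq_right.mpr hUG, sup_eq_right.mpr (hUH.trans le_sup_left),
    inf_comm, sup_comm, and_comm]

def supEqTopInfEqEquiv {U H : Submodule R M} (hUH : U ≤ H) :
    {G : Submodule R M // G ⊔ H = ⊤ ∧ G ⊓ H = U} ≃
      {C : Submodule R (M ⧸ U) // IsCompl (H.map U.mkQ) C} where
  toFun G := ⟨G.1.map U.mkQ, (isCompl_map_mkQ_iff hUH (G.2.2.symm.le.trans inf_le_left)).mpr G.2⟩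
  invFun C := ⟨C.1.comap U.mkQ, (isCompl_map_mkQ_iff hUH (U.le_comap_mkQ C.1)).mp
    (by rw [map_comap_eq_of_surjective U.mkQ_surjective]; exact C.2)⟩
  left_inv G := Subtype.ext <| by
    dsimp only
    rw [comap_map_mkQ, sup_eq_right.mpr (G.2.2.symm.le.trans inf_le_left)]
  right_inv C := Subtype.ext <| map_comap_eq_of_surjective U.mkQ_surjective C.1

end Submodule

end Quotient

section DivisionRing

variable {D V : Type*} [DivisionRing D] [AddCommGroup V] [Module D V] [FiniteDimensional D V]

def linearIndependentSpanEqEquiv {k : ℕ} {W : Submodule D V} (hW : finrank D W = k) :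
    {s : Fin k → V // LinearIndependent D s ∧ span D (Set.range s) = W} ≃
      {t : Fin k → W // LinearIndependent D t} where
  toFun s := ⟨fun i => ⟨s.1 i, span_le.mp s.2.2.le ⟨i, rfl⟩⟩, s.2.1.of_comp W.subtype⟩
  invFun t := ⟨W.subtype ∘ t.1, t.2.map' W.subtype W.ker_subtype, by
    rw [Set.range_comp, span_image, t.2.span_eq_top_of_card_eq_finrank' (by simp [hW]),
      Submodule.map_top, range_subtype]⟩
  left_inv _ := rfl
  right_inv _ := rfl

theorem Submodule.finrank_map_mkQ_add_finrank {U H : Submodule D V} (hUH : U ≤ H) :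
    finrank D (H.map U.mkQ) + finrank D U = finrank D H := by
  have h := LinearMap.finrank_range_add_finrank_ker (U.mkQ.comp H.subtype)
  rw [LinearMap.range_comp, range_subtype, LinearMap.ker_comp, ker_mkQ,
    (comapSubtypeEquivOfLe hUH).finrank_eq] at h
  exact h

end DivisionRing

section Counting

variable {F V : Type*} [Field F] [Fintype F] [AddCommGroup V] [Module F V]

theorem card_submodule_finrank_eq_mul_prod [Finite V] {k : ℕ} (hk : k ≤ finrank F V) :
    Nat.card {W : Submodule F V // finrank F W = k} *
        ∏ i : Fin k, (Fintype.card F ^ k - Fintype.card F ^ (i : ℕ)) =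
      ∏ i : Fin k, (Fintype.card F ^ finrank F V - Fintype.card F ^ (i : ℕ)) := by
  rw [← card_linearIndependent hk]
  symm
  refine Nat.card_eq_card_mul_of_card_fiber
    (fun s => ⟨span F (Set.range s.1), by rw [finrank_span_eq_card s.2, Fintype.card_fin]⟩)
    fun W => ?_
  rw [Nat.card_congr ((Equiv.subtypeEquivRight fun _ => Subtype.ext_iff).trans
      ((Equiv.subtypeSubtypeEquivSubtypeInter _ _).trans (linearIndependentSpanEqEquiv W.2))),
    card_linearIndependent W.2.ge, W.2]

theorem card_submodule_finrank_eq [Finite V] {k : ℕ} (hk : k ≤ finrank F V) :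
    (Nat.card {W : Submodule F V // finrank F W = k} : ℚ) =
      (Fintype.card F : ℚ) ^ ((finrank F V - k) * k) * qPoch (Fintype.card F) (finrank F V) /
        (qPoch (Fintype.card F) k * qPoch (Fintype.card F) (finrank F V - k)) := by
  obtain ⟨m, hm⟩ : ∃ m, finrank F V = m + k := ⟨finrank F V - k, by omega⟩
  set q := Fintype.card F
  have hq : 1 < (q : ℚ) := by exact_mod_cast Fintype.one_lt_card
  have hcount := congrArg (Nat.cast : ℕ → ℚ) (card_submodule_finrank_eq_mul_prod hk)
  have hA := cast_prod_pow_sub_pow_mul_qPoch (Fintype.card_pos (α := F)) k 0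
  have hB := cast_prod_pow_sub_pow_mul_qPoch (Fintype.card_pos (α := F)) k m
  rw [qPoch_zero, mul_one, zero_add] at hA
  rw [hm, Nat.cast_mul] at hcount
  rw [hm, Nat.add_sub_cancel, eq_div_iff (mul_pos (qPoch_pos hq k) (qPoch_pos hq m)).ne']
  refine mul_left_cancel₀ (pow_ne_zero (k * k) (zero_lt_one.trans hq).ne') ?_
  calc (q : ℚ) ^ (k * k) * (Nat.card {W : Submodule F V // finrank F W = k} *
          (qPoch q k * qPoch q m))
      = Nat.card {W : Submodule F V // finrank F W = k} * ((q : ℚ) ^ (k * k) * qPoch q k) *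
          qPoch q m := by ring
    _ = ((∏ i : Fin k, (q ^ (m + k) - q ^ (i : ℕ)) : ℕ) : ℚ) * qPoch q m := by
          rw [← hA, hcount]
    _ = (q : ℚ) ^ (k * k) * ((q : ℚ) ^ (m * k) * qPoch q (m + k)) := by rw [hB]; ring

theorem card_isCompl [FiniteDimensional F V] (W : Submodule F V) :
    Nat.card {C // IsCompl W C} =
      Fintype.card F ^ ((finrank F V - finrank F W) * finrank F W) := by
  obtain ⟨C₀, hC₀⟩ := W.exists_isCompl
  rw [Nat.card_congr (W.isComplEquivProj.trans
      (W.projEquivLinearMapQuotient (W.isComplEquivProj ⟨C₀, hC₀⟩))),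
    natCard_eq_pow_finrank (K := F), Nat.card_eq_fintype_card, finrank_linearMap,
    W.finrank_quotient]

theorem card_submodule_sup_eq_top_inf_eq [FiniteDimensional F V] {U H : Submodule F V}
    (hUH : U ≤ H) :
    Nat.card {G : Submodule F V // G ⊔ H = ⊤ ∧ G ⊓ H = U} =
      Fintype.card F ^ ((finrank F V - finrank F H) * (finrank F H - finrank F U)) := by
  rw [Nat.card_congr (supEqTopInfEqEquiv hUH), card_isCompl]
  have := finrank_map_mkQ_add_finrank hUH
  have := U.finrank_quotient_add_finrank
  have := H.finrank_le
  congr 2 <;> omega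

theorem card_submodule_finrank_eq_sup_eq_top [Finite V] (H : Submodule F V) {c : ℕ}
    (hc : finrank F V ≤ c + finrank F H) :
    Nat.card {G : Submodule F V // finrank F G = c ∧ G ⊔ H = ⊤} =
      Nat.card {U : Submodule F H // finrank F U = finrank F H + c - finrank F V} *
        Fintype.card F ^ ((finrank F V - finrank F H) * (finrank F V - c)) := by
  have hdim (G : Submodule F V) (hG : G ⊔ H = ⊤) :
      finrank F G + finrank F H = finrank F V + finrank F ↥(G ⊓ H) := by
    rw [← finrank_sup_add_finrank_inf_eq, hG, finrank_top]
  let f (G : {G : Submodule F V // finrank F G = c ∧ G ⊔ H = ⊤}) :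
      {U : Submodule F H // finrank F U = finrank F H + c - finrank F V} :=
    ⟨G.1.comap H.subtype, by
      rw [← finrank_map_subtype_eq, map_comap_subtype, inf_comm]; have := hdim G.1 G.2.2; omega⟩
  refine Nat.card_eq_card_mul_of_card_fiber f fun U => ?_
  have hfiber : {G // f G = U} ≃ {G : Submodule F V // G ⊔ H = ⊤ ∧ G ⊓ H = U.1.map H.subtype} :=
    (Equiv.subtypeEquivRight fun G => by
      rw [Subtype.ext_iff, ← (map_injective_of_injective H.injective_subtype).eq_iff,
        map_comap_subtype, inf_comm, and_iff_right G.2.2]).trans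
    (Equiv.subtypeSubtypeEquivSubtype fun {G} hG => ⟨by
      have := hdim G hG.1; rw [hG.2, finrank_map_subtype_eq, U.2] at this; omega, hG.1⟩)
  rw [Nat.card_congr hfiber, card_submodule_sup_eq_top_inf_eq (map_subtype_le _ _),
    finrank_map_subtype_eq, U.2]
  congr 2
  omega

end Counting

/-- The number of subspaces `G` of `K` with `dim G = c` and `G + H = K` equals
`q^{(b-c)c} (q⁻¹)_a / ((q⁻¹)_{b-c} (q⁻¹)_{a+c-b})`. -/
theorem statement7 {F : Type*} [Field F] [Fintype F]
    (K : Type*) [AddCommGroup K] [Module F K] [FiniteDimensional F K]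
    (H : Submodule F K) (a b c : ℕ)
    (hb : Module.finrank F K = b) (ha : Module.finrank F H = a)
    (hc1 : b - a ≤ c) (hc2 : c ≤ b) :
    (Nat.card {G : Submodule F K // Module.finrank F G = c ∧ G ⊔ H = ⊤} : ℚ) =
      (Fintype.card F : ℚ) ^ ((b - c) * c) * qPoch (Fintype.card F) a /
        (qPoch (Fintype.card F) (b - c) * qPoch (Fintype.card F) (a + c - b)) := by
  have : Finite K := Module.finite_of_finite F
  have hab : a ≤ b := ha ▸ hb ▸ H.finrank_le
  have hcount := card_submodule_finrank_eq_sup_eq_top H (c := c) (by omega)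
  rw [hb, ha] at hcount
  rw [hcount, Nat.cast_mul, card_submodule_finrank_eq (ha.symm ▸ (by omega : a + c - b ≤ a)), ha,
    show a - (a + c - b) = b - c by omega,
    show (b - c) * c = (b - c) * (a + c - b) + (b - a) * (b - c) by
      rw [mul_comm (b - a), ← Nat.mul_add]; congr 1; omega]
  push_cast
  ring
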